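/- (Paraparticle realization of a Lie superalgebra.) Let L₀, L₁ be ℂ-vector spaces equipped with ℂ-bilinear maps ⟨·,·⟩₀₀ : L₀ × L₀ → L₀, ⟨·,·⟩₀₁ : L₀ × L₁ → L₁ and ⟨·,·⟩₁₁ : L₁ × L₁ → L₀ (the bracket of a Lie superalgebra L = L₀ ⊕ L₁ restricted to homogeneous components). Suppose given ℂ-linear maps 𝔞 : L₀ → Matrix (Fin m) (Fin m) ℂ, 𝔡 : L₀ → Matrix (Fin n) (Fin n) ℂ, 𝔟 : L₁ → Matrix (Fin m) (Fin n) ℂ, 𝔠 : L₁ → Matrix (Fin n) (Fin m) ℂ forming a graded matrix representation, i.e. for all x, x' ∈ L₀ and y, y' ∈ L₁: 𝔞⟨x,x'⟩₀₀ = 𝔞x·𝔞x' − 𝔞x'·𝔞x, 𝔡⟨x,x'⟩₀₀ = 𝔡x·𝔡x' − 𝔡x'·𝔡x, 𝔟⟨x,y⟩₀₁ = 𝔞x·𝔟y − 𝔟y·𝔡x, 𝔠⟨x,y⟩₀₁ = 𝔡x·𝔠y − 𝔠y·𝔞x, 𝔞⟨y,y'⟩₁₁ = 𝔟y·𝔠y'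 + 𝔟y'·𝔠y, 𝔡⟨y,y'⟩₁₁ = 𝔠y·𝔟y' + 𝔠y'·𝔟y. Let A be an associative unital ℂ-algebra containing parabosons B_k^± (k ∈ Fin m) and parafermions F_α^± (α ∈ Fin n) satisfying the relative parabose (Greenberg–Messiah) mixed relations, and define J₀ : L₀ → A by J₀(x) := (1/2)·Σ_{k,l} 𝔞(x)_{kl}·{B_k^+, B_l^−} + (1/2)·Σ_{α,β} 𝔡(x)_{αβ}·[F_α^+, F_β^−] and J₁ : L₁ → A by J₁(y) := (1/2)·Σ_{k,α} ( 𝔟(y)_{kα}·{B_k^+, F_α^−} + 𝔠(y)_{αk}·{F_α^+, B_k^−} ). Then for all x, x' ∈ L₀ and y, y' ∈ L₁: J₀(⟨x,x'⟩₀₀) = [J₀(x), J₀(x')], J₁(⟨x,y⟩₀₁) = [J₀(x), J₁(y)], and J₀(⟨y,y'⟩₁₁) = {J₁(y), J₁(y')}; i.e. J realizes the Lie superalgebra bracket via paraparticles. -/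

import Mathlib

open scoped BigOperators

noncomputable section

/-- The ringComm `[x, y] = x * y - y * x`. -/
def ringComm {A : Type*} [Ring A] (x y : A) : A := x * y - y * x

/-- The ringAnticomm `{x, y} = x * y + y * x`. -/
def ringAnticomm {A : Type*} [Ring A] (x y : A) : A := x * y + y * x

/-- A family of parabosons: `B k 1 = B_k^+`, `B k (-1) = B_k^-`, satisfying the
paraboson trilinear relations. -/
def IsParabosonFamily {A : Type*} [Ring A] [Algebra ℂ A] {ι : Type*} [DecidableEq ι]
    (B : ι → ℂ → A) : Prop :=
  ∀ (i j k : ι), ∀ ξ ∈ ({1, -1} : Set ℂ), ∀ η ∈ ({1, -1} : Set ℂ),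
    ∀ ε ∈ ({1, -1} : Set ℂ),
      ringComm (ringAnticomm (B i ξ) (B j η)) (B k ε) =
        ((ε - η) * (if j = k then (1 : ℂ) else 0)) • B i ξ +
          ((ε - ξ) * (if i = k then (1 : ℂ) else 0)) • B j η

/-- A family of parafermions: `F α 1 = F_α^+`, `F α (-1) = F_α^-`, satisfying the
parafermion trilinear relations. -/
def IsParafermionFamily {A : Type*} [Ring A] [Algebra ℂ A] {κ : Type*} [DecidableEq κ]
    (F : κ → ℂ → A) : Prop :=
  ∀ (i j k : κ), ∀ ξ ∈ ({1, -1} : Set ℂ), ∀ η ∈ ({1, -1} : Set ℂ),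
    ∀ ε ∈ ({1, -1} : Set ℂ),
      ringComm (ringComm (F i ξ) (F j η)) (F k ε) =
        ((1 / 2 : ℂ) * (ε - η) ^ 2 * (if j = k then (1 : ℂ) else 0)) • F i ξ -
          ((1 / 2 : ℂ) * (ε - ξ) ^ 2 * (if i = k then (1 : ℂ) else 0)) • F j η

/-- The relative parabose (Greenberg–Messiah) mixed trilinear relations between
a family of parabosons `B` and a family of parafermions `F`. -/
def RelParaboseMixed {A : Type*} [Ring A] [Algebra ℂ A] {ι κ : Type*} [DecidableEq ι] [DecidableEq κ]
    (B : ι → ℂ → A) (F : κ → ℂ → A) : Prop :=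
  ∀ (i j : ι) (α β : κ), ∀ ξ ∈ ({1, -1} : Set ℂ), ∀ η ∈ ({1, -1} : Set ℂ),
    ∀ ε ∈ ({1, -1} : Set ℂ),
      ringComm (ringAnticomm (B i ξ) (B j η)) (F α ε) = 0 ∧
      ringComm (ringComm (F α ξ) (F β η)) (B i ε) = 0 ∧
      ringComm (ringAnticomm (B i ξ) (F α η)) (B j ε) =
        ((ε - ξ) * (if i = j then (1 : ℂ) else 0)) • F α η ∧
      ringAnticomm (ringAnticomm (B i ξ) (F α η)) (F β ε) =
        ((1 / 2 : ℂ) * (ε - η) ^ 2 * (if α = β then (1 : ℂ) else 0)) • B i ξ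

/-- The even-part realization map `J(M,P)`. -/
def Jmap {A : Type*} [Ring A] [Algebra ℂ A] {m n : ℕ}
    (B : Fin m → ℂ → A) (F : Fin n → ℂ → A)
    (M : Matrix (Fin m) (Fin m) ℂ) (P : Matrix (Fin n) (Fin n) ℂ) : A :=
  (1 / 2 : ℂ) • ∑ k, ∑ l, M k l • ringAnticomm (B k 1) (B l (-1)) +
    (1 / 2 : ℂ) • ∑ α, ∑ β, P α β • ringComm (F α 1) (F β (-1))

/-- The odd-part realization map `K(Q,R)`. -/
def Kmap {A : Type*} [Ring A] [Algebra ℂ A] {m n : ℕ}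
    (B : Fin m → ℂ → A) (F : Fin n → ℂ → A)
    (Q : Matrix (Fin m) (Fin n) ℂ) (R : Matrix (Fin n) (Fin m) ℂ) : A :=
  (1 / 2 : ℂ) • ∑ k, ∑ α,
    (Q k α • ringAnticomm (B k 1) (F α (-1)) + R α k • ringAnticomm (F α 1) (B k (-1)))

/-!
Under (anti)commutators the quadratic elements `{B_k^+, B_l^-}`, `[F_α^+, F_β^-]`,
`{B_k^+, F_α^-}`, `{F_α^+, B_k^-}` behave like twice the matrix units of `gl(m|n)`: `[x, ·]` is a
derivation for both `[·, ·]` and `{·, ·}`, and `{x, {y, z}} = [[x, y], z] + {y, {x, z}}`, so the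
trilinear relations express the bracket of two of them as Kronecker deltas times a third.
Summed against matrix entries, the deltas become matrix products. Hence the supermatrix
`(a q; r d) ↦ J(a, d) + K(q, r)` is a representation of `gl(m|n)` in `A`, and composing it with
the graded matrix representation of `L` gives the realization.
-/
open Finset

section Brackets

variable {A : Type*} [Ring A]

theorem ringAnticomm_comm (x y : A) : ringAnticomm x y = ringAnticomm y x :=
  add_comm _ _

theorem ringComm_swap (x y : A) : ringComm x y = -ringComm y x :=
  (neg_sub _ _).symm

theorem ringComm_ringComm_right (x y z : A) :
    ringComm x (ringComm y z) = ringComm (ringComm x y) z + ringComm y (ringComm x z) := by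
  simp only [ringComm]; noncomm_ring

theorem ringComm_ringAnticomm_right (x y z : A) :
    ringComm x (ringAnticomm y z) =
      ringAnticomm (ringComm x y) z + ringAnticomm y (ringComm x z) := by
  simp only [ringComm, ringAnticomm]; noncomm_ring

theorem ringAnticomm_ringAnticomm_right (x y z : A) :
    ringAnticomm x (ringAnticomm y z) =
      ringComm (ringComm x y) z + ringAnticomm y (ringAnticomm x z) := by
  simp only [ringComm, ringAnticomm]; noncomm_ring

variable (R : Type*) [CommSemiring R] [Algebra R A]

def ringCommBilin : A →ₗ[R] A →ₗ[R] A := LinearMap.mul R A - (LinearMap.mul R A).flip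

def ringAnticommBilin : A →ₗ[R] A →ₗ[R] A := LinearMap.mul R A + (LinearMap.mul R A).flip

@[simp]
theorem ringCommBilin_apply (x y : A) : ringCommBilin R x y = ringComm x y := rfl

@[simp]
theorem ringAnticommBilin_apply (x y : A) : ringAnticommBilin R x y = ringAnticomm x y := rfl

end Brackets

section MatrixCombination

variable {R M N P ι κ μ : Type*} [CommSemiring R] [AddCommMonoid M] [Module R M]
  [AddCommMonoid N] [Module R N] [AddCommMonoid P] [Module R P] [Fintype ι] [Fintype κ] [Fintype μ]

def matrixCombination (X : ι → κ → M) : Matrix ι κ R →ₗ[R] M where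
  toFun f := ∑ i, ∑ j, f i j • X i j
  map_add' f g := by simp only [Matrix.add_apply, add_smul, sum_add_distrib]
  map_smul' c f := by
    simp only [Matrix.smul_apply, smul_eq_mul, mul_smul, smul_sum, RingHom.id_apply]

theorem matrixCombination_apply (X : ι → κ → M) (f : Matrix ι κ R) :
    matrixCombination X f = ∑ i, ∑ j, f i j • X i j := rfl

theorem map_matrixCombination_matrixCombination {ι' κ' : Type*} [Fintype ι'] [Fintype κ']
    (φ : M →ₗ[R] N →ₗ[R] P) (X : ι → κ → M) (Y : ι' → κ' → N) (f : Matrix ι κ R)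
    (g : Matrix ι' κ' R) :
    φ (matrixCombination X f) (matrixCombination Y g) =
      ∑ i, ∑ j, ∑ k, ∑ l, (f i j * g k l) • φ (X i j) (Y k l) := by
  simp only [matrixCombination_apply, LinearMap.map_sum₂, LinearMap.map_smul₂]
  simp only [map_sum, map_smul, smul_sum, smul_smul]

theorem sum_ite_inner_eq_matrixCombination_mul [DecidableEq κ] (f : Matrix ι κ R)
    (g : Matrix κ μ R) (Z : ι → μ → M) (c : R) :
    ∑ i, ∑ j, ∑ k, ∑ l, (f i j * g k l) • ((c * if j = k then 1 else 0) • Z i l) =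
      c • matrixCombination Z (f * g) := by
  simp only [mul_ite, mul_one, mul_zero, ite_smul, zero_smul, smul_ite, smul_zero, sum_ite_irrel,
    sum_const_zero, sum_ite_eq, mem_univ, if_true]
  simp only [matrixCombination_apply, Matrix.mul_apply, smul_sum, sum_smul, smul_smul]
  refine sum_congr rfl fun i _ => sum_comm.trans ?_
  simp only [mul_comm c]

theorem sum_ite_outer_eq_matrixCombination_mul [DecidableEq ι] (f : Matrix ι κ R)
    (g : Matrix μ ι R) (W : μ → κ → M) (c : R) :
    ∑ i, ∑ j, ∑ k, ∑ l, (f i j * g k l) • ((c * if i = l then 1 else 0) • W k j) =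
      c • matrixCombination W (g * f) := by
  simp only [mul_ite, mul_one, mul_zero, ite_smul, zero_smul, smul_ite, smul_zero,
    sum_ite_eq, mem_univ, if_true]
  simp only [matrixCombination_apply, Matrix.mul_apply, smul_sum, sum_smul, smul_smul]
  rw [sum_comm, sum_congr rfl fun j _ => sum_comm, sum_comm]
  simp only [mul_comm c, mul_comm (f _ _)]

end MatrixCombination

theorem one_mem_signs : (1 : ℂ) ∈ ({1, -1} : Set ℂ) := Set.mem_insert 1 _

theorem neg_one_mem_signs : (-1 : ℂ) ∈ ({1, -1} : Set ℂ) := Set.mem_insert_of_mem 1 rfl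

section Pairs

variable {A : Type*} [Ring A] {ι κ : Type*}

def bosonPair (B : ι → ℂ → A) (k l : ι) : A := ringAnticomm (B k 1) (B l (-1))

def fermionPair (F : κ → ℂ → A) (α β : κ) : A := ringComm (F α 1) (F β (-1))

def bosonFermionPair (B : ι → ℂ → A) (F : κ → ℂ → A) (k : ι) (α : κ) : A :=
  ringAnticomm (B k 1) (F α (-1))

def fermionBosonPair (B : ι → ℂ → A) (F : κ → ℂ → A) (α : κ) (k : ι) : A :=
  ringAnticomm (F α 1) (B k (-1))

variable [Algebra ℂ A] [DecidableEq ι] [DecidableEq κ] {B : ι → ℂ → A} {F : κ → ℂ → A}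

theorem ringComm_bosonPair_bosonPair (hB : IsParabosonFamily B) (i j k l : ι) :
    ringComm (bosonPair B i j) (bosonPair B k l) =
      (2 * if j = k then 1 else 0 : ℂ) • bosonPair B i l -
        (2 * if i = l then 1 else 0 : ℂ) • bosonPair B k j := by
  unfold bosonPair
  rw [ringComm_ringAnticomm_right, hB i j k 1 one_mem_signs (-1) neg_one_mem_signs 1 one_mem_signs,
    hB i j l 1 one_mem_signs (-1) neg_one_mem_signs (-1) neg_one_mem_signs]
  simp only [ringAnticomm, add_mul, mul_add, smul_mul_assoc, mul_smul_comm]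
  module

theorem ringComm_fermionPair_fermionPair (hF : IsParafermionFamily F) (i j k l : κ) :
    ringComm (fermionPair F i j) (fermionPair F k l) =
      (2 * if j = k then 1 else 0 : ℂ) • fermionPair F i l -
        (2 * if i = l then 1 else 0 : ℂ) • fermionPair F k j := by
  unfold fermionPair
  rw [ringComm_ringComm_right, hF i j k 1 one_mem_signs (-1) neg_one_mem_signs 1 one_mem_signs,
    hF i j l 1 one_mem_signs (-1) neg_one_mem_signs (-1) neg_one_mem_signs]
  simp only [ringComm, sub_mul, mul_sub, smul_mul_assoc, mul_smul_comm]
  module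

theorem ringComm_bosonPair_fermionPair (hBF : RelParaboseMixed B F) (i j : ι) (α β : κ) :
    ringComm (bosonPair B i j) (fermionPair F α β) = 0 := by
  unfold bosonPair fermionPair
  rw [ringComm_ringComm_right,
    (hBF i j α α 1 one_mem_signs (-1) neg_one_mem_signs 1 one_mem_signs).1,
    (hBF i j β β 1 one_mem_signs (-1) neg_one_mem_signs (-1) neg_one_mem_signs).1]
  simp only [ringComm, zero_mul, mul_zero, sub_zero, add_zero]

theorem ringComm_bosonPair_bosonFermionPair (hB : IsParabosonFamily B) (hBF : RelParaboseMixed B F)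
    (i j k : ι) (α : κ) :
    ringComm (bosonPair B i j) (bosonFermionPair B F k α) =
      (2 * if j = k then 1 else 0 : ℂ) • bosonFermionPair B F i α := by
  unfold bosonPair bosonFermionPair
  rw [ringComm_ringAnticomm_right, hB i j k 1 one_mem_signs (-1) neg_one_mem_signs 1 one_mem_signs,
    (hBF i j α α 1 one_mem_signs (-1) neg_one_mem_signs (-1) neg_one_mem_signs).1]
  simp only [ringAnticomm, add_mul, mul_add, smul_mul_assoc, mul_smul_comm, zero_mul, mul_zero]
  module

theorem ringComm_bosonPair_fermionBosonPair (hB : IsParabosonFamily B) (hBF : RelParaboseMixed B F)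
    (i j : ι) (α : κ) (k : ι) :
    ringComm (bosonPair B i j) (fermionBosonPair B F α k) =
      (-2 * if i = k then 1 else 0 : ℂ) • fermionBosonPair B F α j := by
  unfold bosonPair fermionBosonPair
  rw [ringComm_ringAnticomm_right,
    (hBF i j α α 1 one_mem_signs (-1) neg_one_mem_signs 1 one_mem_signs).1,
    hB i j k 1 one_mem_signs (-1) neg_one_mem_signs (-1) neg_one_mem_signs]
  simp only [ringAnticomm, add_mul, mul_add, smul_mul_assoc, mul_smul_comm, zero_mul, mul_zero]
  module

theorem ringComm_fermionPair_bosonFermionPair (hF : IsParafermionFamily F)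
    (hBF : RelParaboseMixed B F) (α β : κ) (k : ι) (γ : κ) :
    ringComm (fermionPair F α β) (bosonFermionPair B F k γ) =
      (-2 * if α = γ then 1 else 0 : ℂ) • bosonFermionPair B F k β := by
  unfold fermionPair bosonFermionPair
  rw [ringComm_ringAnticomm_right,
    (hBF k k α β 1 one_mem_signs (-1) neg_one_mem_signs 1 one_mem_signs).2.1,
    hF α β γ 1 one_mem_signs (-1) neg_one_mem_signs (-1) neg_one_mem_signs]
  simp only [ringAnticomm, sub_mul, mul_sub, smul_mul_assoc, mul_smul_comm, zero_mul, mul_zero]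
  module

theorem ringComm_fermionPair_fermionBosonPair (hF : IsParafermionFamily F)
    (hBF : RelParaboseMixed B F) (α β γ : κ) (k : ι) :
    ringComm (fermionPair F α β) (fermionBosonPair B F γ k) =
      (2 * if β = γ then 1 else 0 : ℂ) • fermionBosonPair B F α k := by
  unfold fermionPair fermionBosonPair
  rw [ringComm_ringAnticomm_right, hF α β γ 1 one_mem_signs (-1) neg_one_mem_signs 1 one_mem_signs,
    (hBF k k α β 1 one_mem_signs (-1) neg_one_mem_signs (-1) neg_one_mem_signs).2.1]
  simp only [ringAnticomm, sub_mul, mul_sub, smul_mul_assoc, mul_smul_comm, zero_mul, mul_zero]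
  module

theorem ringAnticomm_bosonFermionPair_bosonFermionPair (hBF : RelParaboseMixed B F) (k : ι) (α : κ)
    (l : ι) (β : κ) :
    ringAnticomm (bosonFermionPair B F k α) (bosonFermionPair B F l β) = 0 := by
  unfold bosonFermionPair
  rw [ringAnticomm_ringAnticomm_right,
    (hBF k l α β 1 one_mem_signs (-1) neg_one_mem_signs 1 one_mem_signs).2.2.1,
    (hBF k l α β 1 one_mem_signs (-1) neg_one_mem_signs (-1) neg_one_mem_signs).2.2.2]
  simp only [ringComm, ringAnticomm, smul_mul_assoc, mul_smul_comm]
  module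

theorem ringAnticomm_fermionBosonPair_fermionBosonPair (hBF : RelParaboseMixed B F) (α : κ) (k : ι)
    (β : κ) (l : ι) :
    ringAnticomm (fermionBosonPair B F α k) (fermionBosonPair B F β l) = 0 := by
  unfold fermionBosonPair
  rw [ringAnticomm_comm (F α 1), ringAnticomm_comm (F β 1), ringAnticomm_ringAnticomm_right,
    (hBF k l α β (-1) neg_one_mem_signs 1 one_mem_signs (-1) neg_one_mem_signs).2.2.1,
    (hBF k l α β (-1) neg_one_mem_signs 1 one_mem_signs 1 one_mem_signs).2.2.2]
  simp only [ringComm, ringAnticomm, smul_mul_assoc, mul_smul_comm]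
  module

theorem ringAnticomm_bosonFermionPair_fermionBosonPair (hBF : RelParaboseMixed B F) (k : ι)
    (α β : κ) (l : ι) :
    ringAnticomm (bosonFermionPair B F k α) (fermionBosonPair B F β l) =
      (2 * if α = β then 1 else 0 : ℂ) • bosonPair B k l +
        (2 * if k = l then 1 else 0 : ℂ) • fermionPair F β α := by
  unfold bosonFermionPair fermionBosonPair bosonPair fermionPair
  rw [ringAnticomm_comm (F β 1), ringAnticomm_ringAnticomm_right,
    (hBF k l α β 1 one_mem_signs (-1) neg_one_mem_signs (-1) neg_one_mem_signs).2.2.1,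
    (hBF k l α β 1 one_mem_signs (-1) neg_one_mem_signs 1 one_mem_signs).2.2.2]
  simp only [ringComm, ringAnticomm, smul_mul_assoc, mul_smul_comm]
  module

end Pairs

section Combinations

variable {A : Type*} [Ring A] [Algebra ℂ A] {ι κ : Type*} [Fintype ι] [Fintype κ] [DecidableEq ι]
  [DecidableEq κ] {B : ι → ℂ → A} {F : κ → ℂ → A}

theorem ringComm_combination_bosonPair_bosonPair (hB : IsParabosonFamily B) (a a' : Matrix ι ι ℂ) :
    ringComm (matrixCombination (bosonPair B) a) (matrixCombination (bosonPair B) a') =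
      (2 : ℂ) • matrixCombination (bosonPair B) (a * a' - a' * a) := by
  rw [← ringCommBilin_apply ℂ, map_matrixCombination_matrixCombination]
  simp only [ringCommBilin_apply, ringComm_bosonPair_bosonPair hB, smul_sub, sum_sub_distrib,
    sum_ite_inner_eq_matrixCombination_mul, sum_ite_outer_eq_matrixCombination_mul, map_sub]

theorem ringComm_combination_fermionPair_fermionPair (hF : IsParafermionFamily F)
    (d d' : Matrix κ κ ℂ) :
    ringComm (matrixCombination (fermionPair F) d) (matrixCombination (fermionPair F) d') =
      (2 : ℂ) • matrixCombination (fermionPair F) (d * d' - d' * d) := by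
  rw [← ringCommBilin_apply ℂ, map_matrixCombination_matrixCombination]
  simp only [ringCommBilin_apply, ringComm_fermionPair_fermionPair hF, smul_sub, sum_sub_distrib,
    sum_ite_inner_eq_matrixCombination_mul, sum_ite_outer_eq_matrixCombination_mul, map_sub]

theorem ringComm_combination_bosonPair_fermionPair (hBF : RelParaboseMixed B F) (a : Matrix ι ι ℂ)
    (d : Matrix κ κ ℂ) :
    ringComm (matrixCombination (bosonPair B) a) (matrixCombination (fermionPair F) d) = 0 := by
  rw [← ringCommBilin_apply ℂ, map_matrixCombination_matrixCombination]
  simp only [ringCommBilin_apply, ringComm_bosonPair_fermionPair hBF, smul_zero, sum_const_zero]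

theorem ringComm_combination_bosonPair_bosonFermionPair (hB : IsParabosonFamily B)
    (hBF : RelParaboseMixed B F) (a : Matrix ι ι ℂ) (q : Matrix ι κ ℂ) :
    ringComm (matrixCombination (bosonPair B) a) (matrixCombination (bosonFermionPair B F) q) =
      (2 : ℂ) • matrixCombination (bosonFermionPair B F) (a * q) := by
  rw [← ringCommBilin_apply ℂ, map_matrixCombination_matrixCombination]
  simp only [ringCommBilin_apply, ringComm_bosonPair_bosonFermionPair hB hBF,
    sum_ite_inner_eq_matrixCombination_mul]

theorem ringComm_combination_bosonPair_fermionBosonPair (hB : IsParabosonFamily B)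
    (hBF : RelParaboseMixed B F) (a : Matrix ι ι ℂ) (r : Matrix κ ι ℂ) :
    ringComm (matrixCombination (bosonPair B) a) (matrixCombination (fermionBosonPair B F) r) =
      (-2 : ℂ) • matrixCombination (fermionBosonPair B F) (r * a) := by
  rw [← ringCommBilin_apply ℂ, map_matrixCombination_matrixCombination]
  simp only [ringCommBilin_apply, ringComm_bosonPair_fermionBosonPair hB hBF,
    sum_ite_outer_eq_matrixCombination_mul]

theorem ringComm_combination_fermionPair_bosonFermionPair (hF : IsParafermionFamily F)
    (hBF : RelParaboseMixed B F) (d : Matrix κ κ ℂ) (q : Matrix ι κ ℂ) :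
    ringComm (matrixCombination (fermionPair F) d) (matrixCombination (bosonFermionPair B F) q) =
      (-2 : ℂ) • matrixCombination (bosonFermionPair B F) (q * d) := by
  rw [← ringCommBilin_apply ℂ, map_matrixCombination_matrixCombination]
  simp only [ringCommBilin_apply, ringComm_fermionPair_bosonFermionPair hF hBF,
    sum_ite_outer_eq_matrixCombination_mul]

theorem ringComm_combination_fermionPair_fermionBosonPair (hF : IsParafermionFamily F)
    (hBF : RelParaboseMixed B F) (d : Matrix κ κ ℂ) (r : Matrix κ ι ℂ) :
    ringComm (matrixCombination (fermionPair F) d) (matrixCombination (fermionBosonPair B F) r) =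
      (2 : ℂ) • matrixCombination (fermionBosonPair B F) (d * r) := by
  rw [← ringCommBilin_apply ℂ, map_matrixCombination_matrixCombination]
  simp only [ringCommBilin_apply, ringComm_fermionPair_fermionBosonPair hF hBF,
    sum_ite_inner_eq_matrixCombination_mul]

theorem ringAnticomm_combination_bosonFermionPair_bosonFermionPair (hBF : RelParaboseMixed B F)
    (q q' : Matrix ι κ ℂ) :
    ringAnticomm (matrixCombination (bosonFermionPair B F) q)
      (matrixCombination (bosonFermionPair B F) q') = 0 := by
  rw [← ringAnticommBilin_apply ℂ, map_matrixCombination_matrixCombination]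
  simp only [ringAnticommBilin_apply, ringAnticomm_bosonFermionPair_bosonFermionPair hBF, smul_zero,
    sum_const_zero]

theorem ringAnticomm_combination_fermionBosonPair_fermionBosonPair (hBF : RelParaboseMixed B F)
    (r r' : Matrix κ ι ℂ) :
    ringAnticomm (matrixCombination (fermionBosonPair B F) r)
      (matrixCombination (fermionBosonPair B F) r') = 0 := by
  rw [← ringAnticommBilin_apply ℂ, map_matrixCombination_matrixCombination]
  simp only [ringAnticommBilin_apply, ringAnticomm_fermionBosonPair_fermionBosonPair hBF, smul_zero,
    sum_const_zero]

theorem ringAnticomm_combination_bosonFermionPair_fermionBosonPair (hBF : RelParaboseMixed B F)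
    (q : Matrix ι κ ℂ) (r : Matrix κ ι ℂ) :
    ringAnticomm (matrixCombination (bosonFermionPair B F) q)
      (matrixCombination (fermionBosonPair B F) r) =
      (2 : ℂ) • matrixCombination (bosonPair B) (q * r) +
        (2 : ℂ) • matrixCombination (fermionPair F) (r * q) := by
  rw [← ringAnticommBilin_apply ℂ, map_matrixCombination_matrixCombination]
  simp only [ringAnticommBilin_apply, ringAnticomm_bosonFermionPair_fermionBosonPair hBF, smul_add,
    sum_add_distrib, sum_ite_inner_eq_matrixCombination_mul,
    sum_ite_outer_eq_matrixCombination_mul]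

end Combinations

section Realization

variable {A : Type*} [Ring A] [Algebra ℂ A] {m n : ℕ} {B : Fin m → ℂ → A} {F : Fin n → ℂ → A}

theorem Jmap_eq_matrixCombination (a : Matrix (Fin m) (Fin m) ℂ) (d : Matrix (Fin n) (Fin n) ℂ) :
    Jmap B F a d =
      (1 / 2 : ℂ) • matrixCombination (bosonPair B) a +
        (1 / 2 : ℂ) • matrixCombination (fermionPair F) d :=
  rfl

theorem Kmap_eq_matrixCombination (q : Matrix (Fin m) (Fin n) ℂ) (r : Matrix (Fin n) (Fin m) ℂ) :
    Kmap B F q r =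
      (1 / 2 : ℂ) • (matrixCombination (bosonFermionPair B F) q +
        matrixCombination (fermionBosonPair B F) r) := by
  rw [Kmap, matrixCombination_apply, matrixCombination_apply, sum_comm (γ := Fin n)]
  simp only [bosonFermionPair, fermionBosonPair, sum_add_distrib]

theorem ringComm_Jmap_Jmap (hB : IsParabosonFamily B) (hF : IsParafermionFamily F)
    (hBF : RelParaboseMixed B F) (a a' : Matrix (Fin m) (Fin m) ℂ)
    (d d' : Matrix (Fin n) (Fin n) ℂ) :
    ringComm (Jmap B F a d) (Jmap B F a' d') = Jmap B F (a * a' - a' * a) (d * d' - d' * d) := by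
  rw [Jmap_eq_matrixCombination, Jmap_eq_matrixCombination, Jmap_eq_matrixCombination,
    ← ringCommBilin_apply ℂ]
  simp only [map_add, map_smul, LinearMap.add_apply, LinearMap.smul_apply, ringCommBilin_apply]
  rw [ringComm_swap (matrixCombination (fermionPair F) d),
    ringComm_combination_bosonPair_bosonPair hB,
    ringComm_combination_fermionPair_fermionPair hF, ringComm_combination_bosonPair_fermionPair hBF,
    ringComm_combination_bosonPair_fermionPair hBF]
  module

theorem ringComm_Jmap_Kmap (hB : IsParabosonFamily B) (hF : IsParafermionFamily F)
    (hBF : RelParaboseMixed B F) (a : Matrix (Fin m) (Fin m) ℂ) (d : Matrix (Fin n) (Fin n) ℂ)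
    (q : Matrix (Fin m) (Fin n) ℂ) (r : Matrix (Fin n) (Fin m) ℂ) :
    ringComm (Jmap B F a d) (Kmap B F q r) = Kmap B F (a * q - q * d) (d * r - r * a) := by
  rw [Jmap_eq_matrixCombination, Kmap_eq_matrixCombination, Kmap_eq_matrixCombination,
    ← ringCommBilin_apply ℂ]
  simp only [map_add, map_smul, LinearMap.add_apply, LinearMap.smul_apply, ringCommBilin_apply]
  rw [ringComm_combination_bosonPair_bosonFermionPair hB hBF,
    ringComm_combination_bosonPair_fermionBosonPair hB hBF,
    ringComm_combination_fermionPair_bosonFermionPair hF hBF,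
    ringComm_combination_fermionPair_fermionBosonPair hF hBF, map_sub, map_sub]
  module

theorem ringAnticomm_Kmap_Kmap (hBF : RelParaboseMixed B F) (q q' : Matrix (Fin m) (Fin n) ℂ)
    (r r' : Matrix (Fin n) (Fin m) ℂ) :
    ringAnticomm (Kmap B F q r) (Kmap B F q' r') =
      Jmap B F (q * r' + q' * r) (r * q' + r' * q) := by
  rw [Kmap_eq_matrixCombination, Kmap_eq_matrixCombination, Jmap_eq_matrixCombination,
    ← ringAnticommBilin_apply ℂ]
  simp only [map_add, map_smul, LinearMap.add_apply, LinearMap.smul_apply, ringAnticommBilin_apply]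
  rw [ringAnticomm_comm (matrixCombination (fermionBosonPair B F) r),
    ringAnticomm_combination_bosonFermionPair_bosonFermionPair hBF,
    ringAnticomm_combination_fermionBosonPair_fermionBosonPair hBF,
    ringAnticomm_combination_bosonFermionPair_fermionBosonPair hBF,
    ringAnticomm_combination_bosonFermionPair_fermionBosonPair hBF]
  module

end Realization

/-- Paraparticle realization of an arbitrary Lie superalgebra `L = L₀ ⊕ L₁`, given a
finite-dimensional graded matrix representation with blocks `𝔞, 𝔟, 𝔠, 𝔡`. -/
theorem paraparticle_realization_of_Lie_superalgebra
    {A : Type*} [Ring A] [Algebra ℂ A] {m n : ℕ}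
    {L₀ L₁ : Type*} [AddCommGroup L₀] [Module ℂ L₀] [AddCommGroup L₁] [Module ℂ L₁]
    (br₀₀ : L₀ →ₗ[ℂ] L₀ →ₗ[ℂ] L₀) (br₀₁ : L₀ →ₗ[ℂ] L₁ →ₗ[ℂ] L₁)
    (br₁₁ : L₁ →ₗ[ℂ] L₁ →ₗ[ℂ] L₀)
    (𝔞 : L₀ →ₗ[ℂ] Matrix (Fin m) (Fin m) ℂ) (𝔡 : L₀ →ₗ[ℂ] Matrix (Fin n) (Fin n) ℂ)
    (𝔟 : L₁ →ₗ[ℂ] Matrix (Fin m) (Fin n) ℂ) (𝔠 : L₁ →ₗ[ℂ] Matrix (Fin n) (Fin m) ℂ)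
    (h𝔞 : ∀ x x' : L₀, 𝔞 (br₀₀ x x') = 𝔞 x * 𝔞 x' - 𝔞 x' * 𝔞 x)
    (h𝔡 : ∀ x x' : L₀, 𝔡 (br₀₀ x x') = 𝔡 x * 𝔡 x' - 𝔡 x' * 𝔡 x)
    (h𝔟 : ∀ (x : L₀) (y : L₁), 𝔟 (br₀₁ x y) = 𝔞 x * 𝔟 y - 𝔟 y * 𝔡 x)
    (h𝔠 : ∀ (x : L₀) (y : L₁), 𝔠 (br₀₁ x y) = 𝔡 x * 𝔠 y - 𝔠 y * 𝔞 x)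
    (h𝔞' : ∀ y y' : L₁, 𝔞 (br₁₁ y y') = 𝔟 y * 𝔠 y' + 𝔟 y' * 𝔠 y)
    (h𝔡' : ∀ y y' : L₁, 𝔡 (br₁₁ y y') = 𝔠 y * 𝔟 y' + 𝔠 y' * 𝔟 y)
    (B : Fin m → ℂ → A) (F : Fin n → ℂ → A)
    (hB : IsParabosonFamily B) (hF : IsParafermionFamily F)
    (hBF : RelParaboseMixed B F)
    (J₀ : L₀ → A) (hJ₀ : ∀ x : L₀, J₀ x = Jmap B F (𝔞 x) (𝔡 x))
    (J₁ : L₁ → A) (hJ₁ : ∀ y : L₁, J₁ y = Kmap B F (𝔟 y) (𝔠 y)) :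
    (∀ x x' : L₀, J₀ (br₀₀ x x') = ringComm (J₀ x) (J₀ x')) ∧
    (∀ (x : L₀) (y : L₁), J₁ (br₀₁ x y) = ringComm (J₀ x) (J₁ y)) ∧
    (∀ y y' : L₁, J₀ (br₁₁ y y') = ringAnticomm (J₁ y) (J₁ y')) := by
  refine ⟨fun x x' => ?_, fun x y => ?_, fun y y' => ?_⟩
  · rw [hJ₀, hJ₀, hJ₀, h𝔞, h𝔡, ringComm_Jmap_Jmap hB hF hBF]
  · rw [hJ₁, hJ₁, hJ₀, h𝔟, h𝔠, ringComm_Jmap_Kmap hB hF hBF]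
  · rw [hJ₀, hJ₁, hJ₁, h𝔞', h𝔡', ringAnticomm_Kmap_Kmap hBF]

end
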